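/- Let q > 1 be real, D = diag(q, −q⁻¹), and U = ((1/[2]_q, √[3]_q/[2]_q), (−√[3]_q/[2]_q, 1/[2]_q)). Then the matrix M = D·(U·D²·Uᵀ) satisfies trace(M) = 0 and det(M) = −1; consequently M² = 1 and the eigenvalues of M are +1 and −1. -/

import Mathlib

/-!
Since `[2]² = [3] + 1`, the matrix `U = (c, s; −s, c)` is a rotation, so
`det M = (det D)³ (det U)² = −1`. For `D = diag(a, b)` one computes
`trace M = (a + b)(c²(a² − ab + b²) + s² ab)`; here `ab = −1`, `a² − ab + b² = [3]` and
`s² = [3] c²`, so the trace vanishes. A `2 × 2` matrix with trace `0` and determinant `−1`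
squares to `1` by Cayley–Hamilton.
-/

open Matrix

/-- The quantum integer `[n]_q = (qⁿ − q⁻ⁿ)/(q − q⁻¹)`. -/
noncomputable def qn (q : ℝ) (n : ℤ) : ℝ := (q ^ n - q ^ (-n)) / (q - q⁻¹)

/-- The diagonal R-matrix `D = diag(q, −q⁻¹)`. -/
noncomputable def Dmat (q : ℝ) : Matrix (Fin 2) (Fin 2) ℝ := !![q, 0; 0, -q⁻¹]

/-- The mixing (Racah) matrix `U`. -/
noncomputable def Umat (q : ℝ) : Matrix (Fin 2) (Fin 2) ℝ :=
  !![1 / qn q 2, Real.sqrt (qn q 3) / qn q 2;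
     -Real.sqrt (qn q 3) / qn q 2, 1 / qn q 2]

theorem Matrix.sq_eq_trace_smul_sub_det_smul {R : Type*} [CommRing R] [Nontrivial R]
    (M : Matrix (Fin 2) (Fin 2) R) : M ^ 2 = M.trace • M - M.det • 1 := by
  have h := M.aeval_self_charpoly
  rw [charpoly_fin_two] at h
  simp only [map_add, map_sub, map_pow, Polynomial.aeval_X, map_mul, Polynomial.aeval_C,
    algebraMap_eq_diagonal, Pi.algebraMap_def, Algebra.algebraMap_self, RingHom.id_apply] at h
  rw [sub_add, sub_eq_zero] at h
  rw [h, ← smul_one_eq_diagonal, ← smul_one_eq_diagonal, smul_one_mul]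

theorem Matrix.sq_eq_one_of_trace_eq_zero_of_det_eq_neg_one {R : Type*} [CommRing R]
    [Nontrivial R] {M : Matrix (Fin 2) (Fin 2) R} (htr : M.trace = 0) (hdet : M.det = -1) :
    M ^ 2 = 1 := by
  simp [M.sq_eq_trace_smul_sub_det_smul, htr, hdet]

theorem det_mul_conj_sq {R : Type*} [CommRing R] {n : Type*} [Fintype n] [DecidableEq n]
    (D U : Matrix n n R) : (D * (U * D ^ 2 * Uᵀ)).det = D.det ^ 3 * U.det ^ 2 := by
  simp only [det_mul, det_pow, det_transpose]
  ring

theorem trace_diagonal_mul_rotation_conj {R : Type*} [CommRing R] (a b c s : R) :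
    (!![a, 0; 0, b] * (!![c, s; -s, c] * !![a, 0; 0, b] ^ 2 * (!![c, s; -s, c])ᵀ)).trace =
      (a + b) * (c ^ 2 * (a ^ 2 - a * b + b ^ 2) + s ^ 2 * (a * b)) := by
  simp only [trace_fin_two, sq, mul_apply, Fin.sum_univ_two, transpose_apply, of_apply,
    cons_val_zero, cons_val_one, cons_val_fin_one]
  ring

section QuantumIntegers

variable {q : ℝ}

theorem ne_zero_of_sub_inv_ne_zero (hq : q - q⁻¹ ≠ 0) : q ≠ 0 := by
  rintro rfl
  simp at hq

theorem qn_two (hq : q - q⁻¹ ≠ 0) : qn q 2 = q + q⁻¹ := by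
  rw [qn, div_eq_iff hq, _root_.zpow_neg]
  norm_cast
  ring

theorem qn_three (hq : q - q⁻¹ ≠ 0) : qn q 3 = q ^ 2 + 1 + q⁻¹ ^ 2 := by
  have hq0 := ne_zero_of_sub_inv_ne_zero hq
  rw [qn, div_eq_iff hq, _root_.zpow_neg]
  norm_cast
  field_simp
  ring

theorem qn_three_pos (hq : q - q⁻¹ ≠ 0) : 0 < qn q 3 := by
  rw [qn_three hq]
  positivity

theorem qn_two_sq (hq : q - q⁻¹ ≠ 0) : qn q 2 ^ 2 = qn q 3 + 1 := by
  have hq0 := ne_zero_of_sub_inv_ne_zero hq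
  rw [qn_two hq, qn_three hq]
  field_simp
  ring

theorem qn_two_ne_zero (hq : q - q⁻¹ ≠ 0) : qn q 2 ≠ 0 := by
  rw [← sq_pos_iff, qn_two_sq hq]
  linarith [qn_three_pos hq]

theorem Umat_eq_rotation :
    Umat q = !![1 / qn q 2, √(qn q 3) / qn q 2; -(√(qn q 3) / qn q 2), 1 / qn q 2] := by
  rw [Umat, neg_div]

theorem det_Dmat (hq : q ≠ 0) : (Dmat q).det = -1 := by
  simp [Dmat, det_fin_two_of, hq]

theorem det_Umat (hq : q - q⁻¹ ≠ 0) : (Umat q).det = 1 := by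
  have h2 := qn_two_ne_zero hq
  rw [Umat_eq_rotation, det_fin_two_of]
  field_simp
  rw [Real.sq_sqrt (qn_three_pos hq).le, qn_two_sq hq]
  ring

theorem trace_Dmat_mul_conj (hq : q - q⁻¹ ≠ 0) :
    (Dmat q * (Umat q * Dmat q ^ 2 * (Umat q)ᵀ)).trace = 0 := by
  have hq0 := ne_zero_of_sub_inv_ne_zero hq
  have h2 := qn_two_ne_zero hq
  rw [Dmat, Umat_eq_rotation, trace_diagonal_mul_rotation_conj]
  field_simp
  rw [Real.sq_sqrt (qn_three_pos hq).le, qn_three hq]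
  field_simp
  ring

end QuantumIntegers

/-- `M = D·(U·D²·Uᵀ)` satisfies `trace M = 0`, `det M = −1`,
and consequently `M² = 1` (its eigenvalues are `+1` and `−1`). -/
theorem word_one_two_involution (q : ℝ) (hq : 1 < q) :
    (Dmat q * (Umat q * Dmat q ^ 2 * (Umat q)ᵀ)).trace = 0 ∧
    (Dmat q * (Umat q * Dmat q ^ 2 * (Umat q)ᵀ)).det = -1 ∧
    (Dmat q * (Umat q * Dmat q ^ 2 * (Umat q)ᵀ)) ^ 2 = 1 := by
  have hq' : q - q⁻¹ ≠ 0 := (sub_pos.2 ((inv_lt_one_of_one_lt₀ hq).trans hq)).ne'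
  have htr := trace_Dmat_mul_conj hq'
  have hdet : (Dmat q * (Umat q * Dmat q ^ 2 * (Umat q)ᵀ)).det = -1 := by
    rw [det_mul_conj_sq, det_Dmat (by positivity), det_Umat hq']
    norm_num
  exact ⟨htr, hdet, sq_eq_one_of_trace_eq_zero_of_det_eq_neg_one htr hdet⟩
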